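/- arXiv:2104.02688 — 4 statements merged into one kernel-verified Lean document; each statement's English description precedes it below -/
import Mathlib

section
/- Let H and F be complete σ-algebras on a probability space (Ω, F, P) with H ⊆ F, and let Γ = (γ_i)_{i ∈ I} be a nonempty family of real-valued F-measurable random variables. Then there exists a unique (up to a.s. equality) H-measurable random variable γ_H with values in ℝ ∪ {+∞}, denoted esssup_H Γ, such that: (1) γ_H ≥ γ_i a.s. for every i ∈ I; and (2) every H-measurable random variable ζ with values in ℝ ∪ {+∞} satisfying ζ ≥ γ_i a.s. for all i ∈ I also satisfies ζ ≥ γ_H a.s. -/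
open MeasureTheory Set Filter
open scoped Classical

noncomputable section

/-- Scalar product on `ℝ^d`. -/
def dotp {d : ℕ} (a b : Fin d → ℝ) : ℝ := ∑ i, a i * b i

/-- `κ` is a regular version of the conditional law of `X` knowing the σ-algebra `H`. -/
structure CondLaw {Ω : Type*} (H : MeasurableSpace Ω) {mΩ : MeasurableSpace Ω}
    (μ : Measure Ω) {E : Type*} [MeasurableSpace E] (X : Ω → E) (κ : Ω → Measure E) :
    Prop where
  isProb : ∀ ω, IsProbabilityMeasure (κ ω)
  meas : ∀ A : Set E, MeasurableSet A → Measurable[H] fun ω => κ ω A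
  law : ∀ A : Set E, MeasurableSet A → ∀ B : Set Ω, MeasurableSet[H] B →
    ∫⁻ ω in B, κ ω A ∂μ = μ (B ∩ X ⁻¹' A)

/-- The support of the measure `κ ω`: the intersection of all closed sets of full
measure (for a regular conditional law this is the conditional support). -/
def condSupp {Ω E : Type*} [TopologicalSpace E] [MeasurableSpace E]
    (κ : Ω → Measure E) (ω : Ω) : Set E :=
  ⋂₀ {A : Set E | IsClosed A ∧ κ ω A = 1}

/-- `γ` is (a version of) the conditional essential supremum of `X` knowing `H`. -/
def IsCondEssSup {Ω : Type*} (H : MeasurableSpace Ω) {mΩ : MeasurableSpace Ω}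
    (μ : Measure Ω) (X : Ω → ℝ) (γ : Ω → EReal) : Prop :=
  Measurable[H] γ ∧ (∀ᵐ ω ∂μ, (X ω : EReal) ≤ γ ω) ∧
    ∀ ζ : Ω → EReal, Measurable[H] ζ → (∀ᵐ ω ∂μ, (X ω : EReal) ≤ ζ ω) →
      ∀ᵐ ω ∂μ, γ ω ≤ ζ ω

/-- `γ` is (a version of) the conditional essential infimum of `X` knowing `H`. -/
def IsCondEssInf {Ω : Type*} (H : MeasurableSpace Ω) {mΩ : MeasurableSpace Ω}
    (μ : Measure Ω) (X : Ω → ℝ) (γ : Ω → EReal) : Prop :=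
  Measurable[H] γ ∧ (∀ᵐ ω ∂μ, γ ω ≤ (X ω : EReal)) ∧
    ∀ ζ : Ω → EReal, Measurable[H] ζ → (∀ᵐ ω ∂μ, ζ ω ≤ (X ω : EReal)) →
      ∀ᵐ ω ∂μ, ζ ω ≤ γ ω

/-- `p` is (a version of) the essential infimum of the family `S` of random variables. -/
def IsEssInfSet {Ω : Type*} {mΩ : MeasurableSpace Ω} (μ : Measure Ω)
    (S : Set (Ω → ℝ)) (p : Ω → EReal) : Prop :=
  Measurable[mΩ] p ∧ (∀ f ∈ S, ∀ᵐ ω ∂μ, p ω ≤ (f ω : EReal)) ∧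
    ∀ ζ : Ω → EReal, Measurable[mΩ] ζ → (∀ f ∈ S, ∀ᵐ ω ∂μ, ζ ω ≤ (f ω : EReal)) →
      ∀ᵐ ω ∂μ, ζ ω ≤ p ω

/-- The set of super-hedging prices of the claim `Z` in the one-period market `(y, Y)`. -/
def Prices {Ω : Type*} (H : MeasurableSpace Ω) {mΩ : MeasurableSpace Ω} (μ : Measure Ω)
    {d : ℕ} (y Y : Ω → Fin d → ℝ) (Z : Ω → ℝ) : Set (Ω → ℝ) :=
  {x | Measurable[H] x ∧ ∃ θ : Ω → Fin d → ℝ, Measurable[H] θ ∧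
    ∀ᵐ ω ∂μ, Z ω ≤ x ω + dotp (θ ω) fun i => Y ω i - y ω i}

/-- One-dimensional version of `Prices`. -/
def Prices1 {Ω : Type*} (H : MeasurableSpace Ω) {mΩ : MeasurableSpace Ω} (μ : Measure Ω)
    (y Y : Ω → ℝ) (Z : Ω → ℝ) : Set (Ω → ℝ) :=
  {x | Measurable[H] x ∧ ∃ θ : Ω → ℝ, Measurable[H] θ ∧
    ∀ᵐ ω ∂μ, Z ω ≤ x ω + θ ω * (Y ω - y ω)}

/-- One-period super-hedging prices of the zero claim in the market extended by the
additional asset `(pZ, Z)`. -/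
def PricesExt {Ω : Type*} (H : MeasurableSpace Ω) {mΩ : MeasurableSpace Ω} (μ : Measure Ω)
    {d : ℕ} (y Y : Ω → Fin d → ℝ) (Z pZ : Ω → ℝ) : Set (Ω → ℝ) :=
  {x | Measurable[H] x ∧ ∃ α : Ω → ℝ, Measurable[H] α ∧ ∃ θ : Ω → Fin d → ℝ,
    Measurable[H] θ ∧
    ∀ᵐ ω ∂μ, 0 ≤ x ω + α ω * (Z ω - pZ ω) + dotp (θ ω) fun i => Y ω i - y ω i}

/-- The function `f = -g + δ_{D}` of the paper, valued in `EReal`. -/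
def fObj {Ω : Type*} {d : ℕ} (g : Ω → (Fin d → ℝ) → ℝ) (D : Ω → Set (Fin d → ℝ))
    (ω : Ω) (z : Fin d → ℝ) : EReal :=
  if z ∈ D ω then ((-(g ω z) : ℝ) : EReal) else ⊤

/-- Fenchel–Legendre conjugate of an `EReal`-valued function on `ℝ^d`. -/
def eConj {d : ℕ} (f : (Fin d → ℝ) → EReal) (x : Fin d → ℝ) : EReal :=
  ⨆ z : Fin d → ℝ, ((dotp x z : ℝ) : EReal) - f z

/-- Convex-analytic indicator function `δ_s`. -/
def indicatorE {E : Type*} (s : Set E) (x : E) : EReal := if x ∈ s then 0 else ⊤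

/-- Relative concave envelope of `g` with respect to `D`. -/
def concEnv {d : ℕ} (g : (Fin d → ℝ) → ℝ) (D : Set (Fin d → ℝ)) (x : Fin d → ℝ) : EReal :=
  ⨅ v ∈ {v : (Fin d → ℝ) → ℝ | ConcaveOn ℝ univ v ∧ ∀ z ∈ D, g z ≤ v z}, ((v x : ℝ) : EReal)

/-- Upper semicontinuous closure of an `EReal`-valued function. -/
def usClosure {E : Type*} [TopologicalSpace E] (F : E → EReal) (x : E) : EReal :=
  Filter.limsup F (nhds x)

/-- The slope `θ^*` of Corollary 2.19, with the conventions of the paper. -/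
def thetaStar (g : ℝ → ℝ) (M I : ℝ) (S : EReal) : ℝ :=
  if S = (I : EReal) then 0 else if S = ⊤ then M
  else (g S.toReal - g I) / (S.toReal - I)

/-- Multi-period super-hedging prices at time `t` of the claim `g` paid at time `T`. -/
def PricesMulti {Ω : Type*} {mΩ : MeasurableSpace Ω} (𝓕 : ℕ → MeasurableSpace Ω)
    (μ : Measure Ω) {d : ℕ} (S : ℕ → Ω → Fin d → ℝ) (t T : ℕ) (g : Ω → ℝ) :
    Set (Ω → ℝ) :=
  {x | Measurable[𝓕 t] x ∧ ∃ θ : ℕ → Ω → Fin d → ℝ, (∀ u, Measurable[𝓕 u] (θ u)) ∧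
    ∃ ε : Ω → ℝ, Measurable[𝓕 T] ε ∧ (∀ᵐ ω ∂μ, 0 ≤ ε ω) ∧
    ∀ᵐ ω ∂μ, x ω + (∑ u ∈ Finset.Icc (t+1) T,
      dotp (θ (u-1) ω) fun i => S u ω i - S (u-1) ω i) - ε ω = g ω}

/-- One-step super-hedging prices at time `t` of the (extended-real) claim `G`
paid at time `t+1`. -/
def OneStepPrices {Ω : Type*} {mΩ : MeasurableSpace Ω} (𝓕 : ℕ → MeasurableSpace Ω)
    (μ : Measure Ω) {d : ℕ} (S : ℕ → Ω → Fin d → ℝ) (t : ℕ) (G : Ω → EReal) :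
    Set (Ω → ℝ) :=
  {x | Measurable[𝓕 t] x ∧ ∃ θ : Ω → Fin d → ℝ, Measurable[𝓕 t] θ ∧
    ∀ᵐ ω ∂μ, G ω ≤ ((x ω + dotp (θ ω) fun i => S (t+1) ω i - S t ω i : ℝ) : EReal)}

/-- Multi-period super-hedging prices in the market extended by the additional asset `C`. -/
def PricesMultiExt {Ω : Type*} {mΩ : MeasurableSpace Ω} (𝓕 : ℕ → MeasurableSpace Ω)
    (μ : Measure Ω) {d : ℕ} (S : ℕ → Ω → Fin d → ℝ) (C : ℕ → Ω → ℝ) (t T : ℕ)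
    (g : Ω → ℝ) : Set (Ω → ℝ) :=
  {x | Measurable[𝓕 t] x ∧ ∃ θ : ℕ → Ω → Fin d → ℝ, (∀ u, Measurable[𝓕 u] (θ u)) ∧
    ∃ α : ℕ → Ω → ℝ, (∀ u, Measurable[𝓕 u] (α u)) ∧
    ∃ ε : Ω → ℝ, Measurable[𝓕 T] ε ∧ (∀ᵐ ω ∂μ, 0 ≤ ε ω) ∧
    ∀ᵐ ω ∂μ, x ω + (∑ u ∈ Finset.Icc (t+1) T,
      ((dotp (θ (u-1) ω) fun i => S u ω i - S (u-1) ω i) +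
        α (u-1) ω * (C u ω - C (u-1) ω))) - ε ω = g ω}

/-- The set `R_t^T` of claims super-replicable at zero cost, one-dimensional case. -/
def RsetM {Ω : Type*} {mΩ : MeasurableSpace Ω} (𝓕 : ℕ → MeasurableSpace Ω)
    (μ : Measure Ω) (S : ℕ → Ω → ℝ) (t T : ℕ) : Set (Ω → ℝ) :=
  {X | ∃ θ : ℕ → Ω → ℝ, (∀ u, Measurable[𝓕 u] (θ u)) ∧
    ∃ ε : Ω → ℝ, Measurable[𝓕 T] ε ∧ (∀ᵐ ω ∂μ, 0 ≤ ε ω) ∧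
    ∀ᵐ ω ∂μ, X ω = (∑ u ∈ Finset.Icc (t+1) T, θ (u-1) ω * (S u ω - S (u-1) ω)) - ε ω}

/-- Closure with respect to convergence in probability. -/
def closureP {Ω : Type*} {mΩ : MeasurableSpace Ω} (μ : Measure Ω) (A : Set (Ω → ℝ)) :
    Set (Ω → ℝ) :=
  {X | ∃ f : ℕ → Ω → ℝ, (∀ n, f n ∈ A) ∧ TendstoInMeasure μ f Filter.atTop X}


namespace CondEssSupAux

open scoped ENNReal

/-- Bounded strictly monotone transform on `EReal`. -/
def phi : EReal → ℝ := fun x =>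
  if x = ⊥ then -2 else if x = ⊤ then 2 else Real.arctan x.toReal

lemma arctan_lt_two (r : ℝ) : Real.arctan r < 2 := by
  have h1 := Real.arctan_lt_pi_div_two r
  have h2 : Real.pi < 3.15 := Real.pi_lt_d2
  linarith

lemma neg_two_lt_arctan (r : ℝ) : -2 < Real.arctan r := by
  have h1 := Real.neg_pi_div_two_lt_arctan r
  have h2 : Real.pi < 3.15 := Real.pi_lt_d2
  linarith

lemma phi_bot : phi ⊥ = -2 := by simp [phi]
lemma phi_top : phi ⊤ = 2 := by simp [phi]
lemma phi_coe (r : ℝ) : phi (r : EReal) = Real.arctan r := by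
  simp [phi, EReal.coe_ne_bot, EReal.coe_ne_top]

lemma phi_strictMono : StrictMono phi := by
  intro x y hxy
  induction x using EReal.rec with
  | bot =>
    rw [phi_bot]
    induction y using EReal.rec with
    | bot => exact absurd hxy (lt_irrefl _)
    | coe r => rw [phi_coe]; exact neg_two_lt_arctan r
    | top => rw [phi_top]; norm_num
  | coe r =>
    rw [phi_coe]
    induction y using EReal.rec with
    | bot => exact absurd hxy (by simp)
    | coe s =>
      rw [phi_coe]
      exact Real.arctan_strictMono (by exact_mod_cast hxy)
    | top => rw [phi_top]; exact arctan_lt_two r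
  | top => exact absurd hxy (by simp)

lemma neg_two_le_phi (x : EReal) : -2 ≤ phi x := by
  induction x using EReal.rec with
  | bot => rw [phi_bot]
  | coe r => rw [phi_coe]; exact (neg_two_lt_arctan r).le
  | top => rw [phi_top]; norm_num

lemma phi_le_two (x : EReal) : phi x ≤ 2 := by
  induction x using EReal.rec with
  | bot => rw [phi_bot]; norm_num
  | coe r => rw [phi_coe]; exact (arctan_lt_two r).le
  | top => rw [phi_top]

lemma neg_two_lt_phi {x : EReal} (hx : x ≠ ⊥) : -2 < phi x := by
  have := phi_strictMono (Ne.bot_lt hx)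
  rwa [phi_bot] at this

lemma phi_measurable : Measurable phi := by
  unfold phi
  exact Measurable.ite (measurableSet_eq) measurable_const
    (Measurable.ite (measurableSet_eq) measurable_const
      (Real.continuous_arctan.measurable.comp measurable_ereal_toReal))

def psi : EReal → ℝ≥0∞ := fun x => ENNReal.ofReal (phi x + 2)

lemma psi_strictMono : StrictMono psi := by
  intro x y hxy
  have h1 : phi x + 2 < phi y + 2 := by linarith [phi_strictMono hxy]
  have h2 : 0 < phi y + 2 := by
    have hy : y ≠ ⊥ := fun hy => absurd (hy ▸ hxy) (by simp)
    linarith [neg_two_lt_phi hy]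
  exact (ENNReal.ofReal_lt_ofReal_iff h2).mpr h1

lemma psi_le_four (x : EReal) : psi x ≤ ENNReal.ofReal 4 := by
  exact ENNReal.ofReal_le_ofReal (by linarith [phi_le_two x])

lemma psi_top : psi ⊤ = ENNReal.ofReal 4 := by
  rw [psi, phi_top]; norm_num

lemma psi_measurable : Measurable psi :=
  ENNReal.measurable_ofReal.comp (phi_measurable.add measurable_const)

end CondEssSupAux

open scoped ENNReal

/-- existence and a.s.-uniqueness of the conditional essential supremum
of a nonempty family of real-valued random variables. -/
theorem exists_unique_condEssSup_family
    {Ω : Type*} (H : MeasurableSpace Ω) [mΩ : MeasurableSpace Ω] (μ : Measure Ω)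
    [IsProbabilityMeasure μ] [μ.IsComplete] (hHF : H ≤ mΩ)
    (hHcomp : ∀ s : Set Ω, μ s = 0 → MeasurableSet[H] s)
    {I : Type*} [Nonempty I] (γ : I → Ω → ℝ) (hγ : ∀ i, Measurable[mΩ] (γ i)) :
    ∃ γH : Ω → EReal,
      (Measurable[H] γH ∧ (∀ ω, γH ω ≠ ⊥) ∧
        (∀ i, ∀ᵐ ω ∂μ, (γ i ω : EReal) ≤ γH ω) ∧
        ∀ ζ : Ω → EReal, Measurable[H] ζ → (∀ ω, ζ ω ≠ ⊥) →
          (∀ i, ∀ᵐ ω ∂μ, (γ i ω : EReal) ≤ ζ ω) → ∀ᵐ ω ∂μ, γH ω ≤ ζ ω) ∧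
      ∀ γ' : Ω → EReal,
        (Measurable[H] γ' ∧ (∀ ω, γ' ω ≠ ⊥) ∧
          (∀ i, ∀ᵐ ω ∂μ, (γ i ω : EReal) ≤ γ' ω) ∧
          ∀ ζ : Ω → EReal, Measurable[H] ζ → (∀ ω, ζ ω ≠ ⊥) →
            (∀ i, ∀ᵐ ω ∂μ, (γ i ω : EReal) ≤ ζ ω) → ∀ᵐ ω ∂μ, γ' ω ≤ ζ ω) →
        γ' =ᵐ[μ] γH := by
  classical
  obtain ⟨i0⟩ := ‹Nonempty I›
  -- The set of admissible upper bounds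
  set S : Set (Ω → EReal) :=
    {ζ | Measurable[H] ζ ∧ (∀ ω, ζ ω ≠ ⊥) ∧ ∀ i, ∀ᵐ ω ∂μ, (γ i ω : EReal) ≤ ζ ω} with hSdef
  have hStop : (fun _ : Ω => (⊤ : EReal)) ∈ S :=
    ⟨measurable_const, fun _ => by simp, fun i => Filter.Eventually.of_forall fun ω => le_top⟩
  haveI : Nonempty S := ⟨⟨_, hStop⟩⟩
  set J : (Ω → EReal) → ℝ≥0∞ := fun ζ => ∫⁻ ω, CondEssSupAux.psi (ζ ω) ∂μ with hJdef
  set m : ℝ≥0∞ := ⨅ ζ : S, J ζ.1 with hmdef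
  have hJ_le_four : ∀ ζ : Ω → EReal, J ζ ≤ ENNReal.ofReal 4 := by
    intro ζ
    calc J ζ ≤ ∫⁻ _, ENNReal.ofReal 4 ∂μ :=
          lintegral_mono fun ω => CondEssSupAux.psi_le_four (ζ ω)
      _ = ENNReal.ofReal 4 := by simp
  have hm_ne_top : m ≠ ⊤ := by
    refine ne_top_of_le_ne_top (by simp : (ENNReal.ofReal 4 : ℝ≥0∞) ≠ ⊤) ?_
    exact (iInf_le _ ⟨_, hStop⟩).trans (hJ_le_four _)
  -- choose a minimizing sequence
  have hsel : ∀ n : ℕ, ∃ ζ : S, J ζ.1 < m + ((n : ℝ≥0∞))⁻¹ := by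
    intro n
    have hlt : m < m + ((n : ℝ≥0∞))⁻¹ :=
      ENNReal.lt_add_right hm_ne_top (by simp)
    rw [hmdef] at hlt ⊢
    exact iInf_lt_iff.mp hlt
  choose ζseq hζseq using hsel
  set γ0 : Ω → EReal := fun ω => ⨅ n, (ζseq n).1 ω with hγ0def
  have hγ0meas : Measurable[H] γ0 := Measurable.iInf fun n => (ζseq n).2.1
  have hγ0_ge : ∀ i, ∀ᵐ ω ∂μ, (γ i ω : EReal) ≤ γ0 ω := by
    intro i
    have h := (ae_all_iff).mpr fun n => (ζseq n).2.2.2 i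
    exact h.mono fun ω hω => le_iInf hω
  have hγ0_ne_ae : ∀ᵐ ω ∂μ, γ0 ω ≠ ⊥ := by
    refine (hγ0_ge i0).mono fun ω hω hb => ?_
    rw [hb, le_bot_iff] at hω
    exact EReal.coe_ne_bot _ hω
  set γH : Ω → EReal := fun ω => if γ0 ω = ⊥ then ⊤ else γ0 ω with hγHdef
  have hγHmeas : Measurable[H] γH :=
    Measurable.ite (hγ0meas (measurableSet_singleton ⊥)) measurable_const hγ0meas
  have hγHne : ∀ ω, γH ω ≠ ⊥ := by
    intro ω
    by_cases h : γ0 ω = ⊥ <;> simp [hγHdef, h]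
  have hγ0_le_γH : ∀ ω, γ0 ω ≤ γH ω := by
    intro ω
    by_cases h : γ0 ω = ⊥ <;> simp [hγHdef, h]
  have hγH_eq_ae : γH =ᵐ[μ] γ0 := hγ0_ne_ae.mono fun ω hω => by
    simp [hγHdef, hω]
  have hγH_ge : ∀ i, ∀ᵐ ω ∂μ, (γ i ω : EReal) ≤ γH ω := fun i =>
    (hγ0_ge i).mono fun ω hω => hω.trans (hγ0_le_γH ω)
  have hγH_in_S : γH ∈ S := ⟨hγHmeas, hγHne, hγH_ge⟩
  -- J γH = m
  have hJγ0_le : J γ0 ≤ m := by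
    have hle : ∀ n : ℕ, J γ0 ≤ m + ((n : ℝ≥0∞))⁻¹ := by
      intro n
      refine le_trans (lintegral_mono fun ω => ?_) (hζseq n).le
      exact CondEssSupAux.psi_strictMono.monotone (iInf_le _ n)
    have htend : Filter.Tendsto (fun n : ℕ => m + ((n : ℝ≥0∞))⁻¹)
        Filter.atTop (nhds (m + 0)) :=
      Filter.Tendsto.add tendsto_const_nhds ENNReal.tendsto_inv_nat_nhds_zero
    rw [add_zero] at htend
    exact ge_of_tendsto' htend hle
  have hJγH_eq_γ0 : J γH = J γ0 :=
    lintegral_congr_ae (hγH_eq_ae.mono fun ω hω => congrArg CondEssSupAux.psi hω)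
  have hm_le_JγH : m ≤ J γH := iInf_le (fun ζ : S => J ζ.1) ⟨γH, hγH_in_S⟩
  have hJγH : J γH = m := le_antisymm (hJγH_eq_γ0 ▸ hJγ0_le) hm_le_JγH
  have hJγH_ne_top : J γH ≠ ⊤ := hJγH ▸ hm_ne_top
  -- minimality of γH
  have hmin : ∀ ζ : Ω → EReal, Measurable[H] ζ → (∀ ω, ζ ω ≠ ⊥) →
      (∀ i, ∀ᵐ ω ∂μ, (γ i ω : EReal) ≤ ζ ω) → ∀ᵐ ω ∂μ, γH ω ≤ ζ ω := by
    intro ζ hζm hζne hζge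
    set ξ : Ω → EReal := fun ω => min (ζ ω) (γH ω) with hξdef
    have hξm : Measurable[H] ξ := hζm.min hγHmeas
    have hξS : ξ ∈ S := by
      refine ⟨hξm, fun ω => ?_, fun i => ?_⟩
      · exact (lt_min (Ne.bot_lt (hζne ω)) (Ne.bot_lt (hγHne ω))).ne'
      · exact ((hζge i).and (hγH_ge i)).mono fun ω hω => le_min hω.1 hω.2
    have hm_le_Jξ : m ≤ J ξ := iInf_le (fun ζ : S => J ζ.1) ⟨ξ, hξS⟩
    have hξ_le : ∀ ω, CondEssSupAux.psi (ξ ω) ≤ CondEssSupAux.psi (γH ω) :=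
      fun ω => CondEssSupAux.psi_strictMono.monotone (min_le_right _ _)
    have hJξ_ne_top : J ξ ≠ ⊤ :=
      ne_top_of_le_ne_top hJγH_ne_top (lintegral_mono hξ_le)
    have haem : AEMeasurable (fun ω => CondEssSupAux.psi (γH ω)) μ :=
      ((CondEssSupAux.psi_measurable.comp hγHmeas).mono hHF le_rfl).aemeasurable
    have heq : (fun ω => CondEssSupAux.psi (ξ ω)) =ᵐ[μ]
        (fun ω => CondEssSupAux.psi (γH ω)) :=
      ae_eq_of_ae_le_of_lintegral_le (Filter.Eventually.of_forall hξ_le) hJξ_ne_top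
        haem (le_trans (hJγH ▸ hm_le_Jξ : J γH ≤ J ξ) le_rfl)
    refine heq.mono fun ω hω => ?_
    have h5 : min (ζ ω) (γH ω) = γH ω := CondEssSupAux.psi_strictMono.injective hω
    exact min_eq_right_iff.mp h5
  refine ⟨γH, ⟨hγHmeas, hγHne, hγH_ge, hmin⟩, ?_⟩
  intro γ' hγ'
  obtain ⟨h1, h2, h3, h4⟩ := hγ'
  have le1 : ∀ᵐ ω ∂μ, γ' ω ≤ γH ω := h4 γH hγHmeas hγHne hγH_ge
  have le2 : ∀ᵐ ω ∂μ, γH ω ≤ γ' ω := hmin γ' h1 h2 h3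
  filter_upwards [le1, le2] with ω h1 h2
  exact le_antisymm h1 h2
end
end

section
/- Let H ⊆ F be complete sub-σ-algebras of a complete probability space and let X be a real-valued F-measurable random variable. Then almost surely: essinf_H X = inf supp_H X and esssup_H X = sup supp_H X; moreover essinf_H X ∈ supp_H X a.s. on the set {essinf_H X > −∞}, esssup_H X ∈ supp_H X a.s. on the set {esssup_H X < ∞}, and the convex hull of supp_H X equals [essinf_H X, esssup_H X] ∩ ℝ almost surely. -/
open MeasureTheory Set Filter
open scoped Classical

noncomputable section

/-! Pointwise, the conditional support is the support of the probability measure `κ ω`.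
For rational `q`, the event `{q ≤ essinf_H X}` is `H`-measurable and `X ≥ q` on it, so
`κ · (Iio q)` vanishes a.e. there; hence `essinf_H X ≤ inf supp_H X`. Conversely,
`inf supp_H X` is `H`-measurable, being the supremum of the rationals `q` with
`κ · (Iio q) = 0`, and lies below `X` because `X ∈ supp_H X` a.s.; so it is dominated by
`essinf_H X`. The same holds for the suprema, and the remaining claims are facts about
nonempty closed subsets of `ℝ`. -/

lemma EReal.le_of_forall_rat_le_imp_le {a b : EReal}
    (h : ∀ q : ℚ, ((q : ℝ) : EReal) ≤ a → ((q : ℝ) : EReal) ≤ b) : a ≤ b := by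
  refine EReal.ge_of_forall_gt_iff_ge.1 fun z hz => ?_
  obtain ⟨q, hzq, hqa⟩ := EReal.lt_iff_exists_rat_btwn.1 hz
  exact hzq.le.trans (h q hqa.le)

lemma EReal.le_of_forall_le_rat_imp_le {a b : EReal}
    (h : ∀ q : ℚ, b ≤ ((q : ℝ) : EReal) → a ≤ ((q : ℝ) : EReal)) : a ≤ b := by
  refine EReal.le_of_forall_lt_iff_le.1 fun z hz => ?_
  obtain ⟨q, hbq, hqz⟩ := EReal.lt_iff_exists_rat_btwn.1 hz
  exact (h q hbq.le).trans hqz.le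

namespace IsClosed

variable {s : Set ℝ}

lemma exists_mem_le_of_sInf_le (hs : IsClosed s) {x : ℝ}
    (hx : sInf (Real.toEReal '' s) ≤ x) : ∃ a ∈ s, a ≤ x := by
  rcases hx.lt_or_eq with hlt | heq
  · obtain ⟨_, ⟨a, ha, rfl⟩, hax⟩ := sInf_lt_iff.1 hlt
    exact ⟨a, ha, (EReal.coe_lt_coe_iff.1 hax).le⟩
  have hne : s.Nonempty := by
    by_contra h
    simp [not_nonempty_iff_eq_empty.1 h] at heq
  have hbdd : BddBelow s :=
    ⟨x, fun a ha => EReal.coe_le_coe_iff.1 (heq ▸ sInf_le (mem_image_of_mem _ ha))⟩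
  have hcoe : ((sInf s : ℝ) : EReal) = sInf (Real.toEReal '' s) :=
    Monotone.map_csInf_of_continuousAt continuous_coe_real_ereal.continuousAt
      (fun _ _ => EReal.coe_le_coe) hne hbdd
  exact ⟨sInf s, hs.csInf_mem hne hbdd, EReal.coe_le_coe_iff.1 (hcoe.trans heq).le⟩

lemma exists_mem_ge_of_le_sSup (hs : IsClosed s) {x : ℝ}
    (hx : (x : EReal) ≤ sSup (Real.toEReal '' s)) : ∃ b ∈ s, x ≤ b := by
  rcases hx.lt_or_eq with hlt | heq
  · obtain ⟨_, ⟨b, hb, rfl⟩, hxb⟩ := lt_sSup_iff.1 hlt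
    exact ⟨b, hb, (EReal.coe_lt_coe_iff.1 hxb).le⟩
  have hne : s.Nonempty := by
    by_contra h
    simp [not_nonempty_iff_eq_empty.1 h] at heq
  have hbdd : BddAbove s :=
    ⟨x, fun b hb => EReal.coe_le_coe_iff.1 (heq ▸ le_sSup (mem_image_of_mem _ hb))⟩
  have hcoe : ((sSup s : ℝ) : EReal) = sSup (Real.toEReal '' s) :=
    Monotone.map_csSup_of_continuousAt continuous_coe_real_ereal.continuousAt
      (fun _ _ => EReal.coe_le_coe) hne hbdd
  exact ⟨sSup s, hs.csSup_mem hne hbdd, EReal.coe_le_coe_iff.1 (heq.trans hcoe.symm).le⟩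

lemma sInf_toEReal_image_mem (hs : IsClosed s) (hne : s.Nonempty)
    (hbot : sInf (Real.toEReal '' s) ≠ ⊥) : sInf (Real.toEReal '' s) ∈ Real.toEReal '' s := by
  obtain ⟨y, hy⟩ := hne
  have htop : sInf (Real.toEReal '' s) ≠ ⊤ :=
    ne_top_of_le_ne_top (EReal.coe_ne_top y) (sInf_le (mem_image_of_mem _ hy))
  have hx := (EReal.coe_toReal htop hbot).symm
  obtain ⟨a, ha, hax⟩ := hs.exists_mem_le_of_sInf_le hx.le
  have hxa := EReal.coe_le_coe_iff.1 (hx ▸ sInf_le (mem_image_of_mem _ ha))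
  exact ⟨a, ha, (congrArg _ (le_antisymm hax hxa)).trans hx.symm⟩

lemma sSup_toEReal_image_mem (hs : IsClosed s) (hne : s.Nonempty)
    (htop : sSup (Real.toEReal '' s) ≠ ⊤) : sSup (Real.toEReal '' s) ∈ Real.toEReal '' s := by
  obtain ⟨y, hy⟩ := hne
  have hbot : sSup (Real.toEReal '' s) ≠ ⊥ :=
    ne_bot_of_le_ne_bot (EReal.coe_ne_bot y) (le_sSup (mem_image_of_mem _ hy))
  have hx := (EReal.coe_toReal htop hbot).symm
  obtain ⟨b, hb, hxb⟩ := hs.exists_mem_ge_of_le_sSup hx.ge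
  have hbx := EReal.coe_le_coe_iff.1 (hx ▸ le_sSup (mem_image_of_mem _ hb))
  exact ⟨b, hb, (congrArg _ (le_antisymm hbx hxb)).trans hx.symm⟩

lemma convexHull_eq_setOf_sInf_le_le_sSup (hs : IsClosed s) :
    convexHull ℝ s =
      {x : ℝ | sInf (Real.toEReal '' s) ≤ x ∧ (x : EReal) ≤ sSup (Real.toEReal '' s)} := by
  refine Subset.antisymm (convexHull_min (fun x hx => ?_) ?_) ?_
  · exact ⟨sInf_le (mem_image_of_mem _ hx), le_sSup (mem_image_of_mem _ hx)⟩
  · exact (ordConnected_Icc.preimage_mono fun _ _ => EReal.coe_le_coe).convex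
  · rintro x ⟨hIx, hxS⟩
    obtain ⟨a, ha, hax⟩ := hs.exists_mem_le_of_sInf_le hIx
    obtain ⟨b, hb, hxb⟩ := hs.exists_mem_ge_of_le_sSup hxS
    exact (convex_convexHull ℝ s).ordConnected.out (subset_convexHull ℝ s ha)
      (subset_convexHull ℝ s hb) ⟨hax, hxb⟩

end IsClosed

namespace MeasureTheory.Measure

variable {ν : Measure ℝ}

lemma coe_le_sInf_support_iff {r : ℝ} :
    (r : EReal) ≤ sInf (Real.toEReal '' ν.support) ↔ ν (Iio r) = 0 := by
  simp only [le_sInf_iff, forall_mem_image, EReal.coe_le_coe_iff]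
  refine ⟨fun h => measure_mono_null (fun y hy hys => (h hys).not_gt hy) measure_compl_support,
    fun h y hy => not_lt.1 fun hyr => subset_compl_support_of_isOpen isOpen_Iio h hyr hy⟩

lemma sSup_support_le_coe_iff {r : ℝ} :
    sSup (Real.toEReal '' ν.support) ≤ r ↔ ν (Ioi r) = 0 := by
  simp only [sSup_le_iff, forall_mem_image, EReal.coe_le_coe_iff]
  refine ⟨fun h => measure_mono_null (fun y hy hys => (h hys).not_gt hy) measure_compl_support,
    fun h y hy => not_lt.1 fun hry => subset_compl_support_of_isOpen isOpen_Ioi h hry hy⟩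

lemma sInf_support_eq_iSup_rat : sInf (Real.toEReal '' ν.support) =
    ⨆ q : ℚ, if ν (Iio (q : ℝ)) = 0 then ((q : ℝ) : EReal) else ⊥ := by
  refine le_antisymm (EReal.le_of_forall_rat_le_imp_le fun q hq => ?_) (iSup_le fun q => ?_)
  · exact le_iSup_of_le q (by rw [if_pos (coe_le_sInf_support_iff.1 hq)])
  · split_ifs with h
    · exact coe_le_sInf_support_iff.2 h
    · exact bot_le

lemma sSup_support_eq_iInf_rat : sSup (Real.toEReal '' ν.support) =
    ⨅ q : ℚ, if ν (Ioi (q : ℝ)) = 0 then ((q : ℝ) : EReal) else ⊤ := by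
  refine le_antisymm (le_iInf fun q => ?_) (EReal.le_of_forall_le_rat_imp_le fun q hq => ?_)
  · split_ifs with h
    · exact sSup_support_le_coe_iff.2 h
    · exact le_top
  · exact iInf_le_of_le q (by rw [if_pos (sSup_support_le_coe_iff.1 hq)])

end MeasureTheory.Measure

lemma condSupp_eq_support {Ω E : Type*} [TopologicalSpace E] [MeasurableSpace E]
    [OpensMeasurableSpace E] (κ : Ω → Measure E) (ω : Ω) [IsProbabilityMeasure (κ ω)] :
    condSupp κ ω = (κ ω).support := by
  rw [condSupp, Measure.support_eq_sInter]
  congr 1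
  ext t
  exact and_congr_right fun ht => (prob_compl_eq_zero_iff ht.measurableSet).symm

namespace CondLaw

variable {Ω E : Type*} {H : MeasurableSpace Ω} {mΩ : MeasurableSpace Ω} {μ : Measure Ω}
  [MeasurableSpace E] {X : Ω → E} {κ : Ω → Measure E}

lemma ae_apply_eq_zero_of_ae_notMem (hκ : CondLaw H μ X κ) (hHF : H ≤ mΩ) {A : Set E}
    (hA : MeasurableSet A) {B : Set Ω} (hB : MeasurableSet[H] B)
    (hXA : ∀ᵐ ω ∂μ, ω ∈ B → X ω ∉ A) : ∀ᵐ ω ∂μ, ω ∈ B → κ ω A = 0 := by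
  have hnull : μ (B ∩ X ⁻¹' A) = 0 :=
    measure_mono_null (fun ω hω => Classical.not_imp.2 ⟨hω.1, Classical.not_not.2 hω.2⟩)
      (ae_iff.1 hXA)
  rw [← hκ.law A hA B hB] at hnull
  exact (setLIntegral_eq_zero_iff (hHF B hB) ((hκ.meas A hA).mono hHF le_rfl)).1 hnull

lemma ae_notMem_of_apply_eq_zero (hκ : CondLaw H μ X κ) (hHF : H ≤ mΩ) {A : Set E}
    (hA : MeasurableSet A) : ∀ᵐ ω ∂μ, κ ω A = 0 → X ω ∉ A := by
  have hB : MeasurableSet[H] {ω | κ ω A = 0} := hκ.meas A hA (measurableSet_singleton 0)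
  have hint : ∫⁻ ω in {ω | κ ω A = 0}, κ ω A ∂μ = 0 :=
    (setLIntegral_eq_zero_iff (hHF _ hB) ((hκ.meas A hA).mono hHF le_rfl)).2
      (ae_of_all _ fun _ hω => hω)
  rw [hκ.law A hA _ hB] at hint
  rw [ae_iff]
  exact measure_mono_null
    (fun ω hω => (Classical.not_imp.1 hω).imp_right Classical.not_not.1) hint

lemma ae_mem_support [TopologicalSpace E] [SecondCountableTopology E] [OpensMeasurableSpace E]
    (hκ : CondLaw H μ X κ) (hHF : H ≤ mΩ) : ∀ᵐ ω ∂μ, X ω ∈ (κ ω).support := by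
  have hbasis := TopologicalSpace.isBasis_countableBasis E
  have hnull : ∀ᵐ ω ∂μ, ∀ t ∈ TopologicalSpace.countableBasis E, κ ω t = 0 → X ω ∉ t :=
    (ae_ball_iff (TopologicalSpace.countable_countableBasis E)).2 fun t ht =>
      hκ.ae_notMem_of_apply_eq_zero hHF (hbasis.isOpen ht).measurableSet
  filter_upwards [hnull] with ω hω
  by_contra hX
  obtain ⟨t, ⟨ht, hXt⟩, h0⟩ := hbasis.nhds_hasBasis.notMem_measureSupport.1 hX
  exact hω t ht h0 hXt

end CondLaw

section RealValued

variable {Ω : Type*} {H : MeasurableSpace Ω} {mΩ : MeasurableSpace Ω} {μ : Measure Ω}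
  {X : Ω → ℝ} {κ : Ω → Measure ℝ}

lemma CondLaw.measurable_sInf_support (hκ : CondLaw H μ X κ) :
    Measurable[H] fun ω => sInf (Real.toEReal '' (κ ω).support) := by
  simp only [Measure.sInf_support_eq_iSup_rat]
  exact .iSup fun q => .ite (hκ.meas _ measurableSet_Iio (measurableSet_singleton 0))
    measurable_const measurable_const

lemma CondLaw.measurable_sSup_support (hκ : CondLaw H μ X κ) :
    Measurable[H] fun ω => sSup (Real.toEReal '' (κ ω).support) := by
  simp only [Measure.sSup_support_eq_iInf_rat]
  exact .iInf fun q => .ite (hκ.meas _ measurableSet_Ioi (measurableSet_singleton 0))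
    measurable_const measurable_const

lemma IsCondEssInf.ae_le_sInf_support {I : Ω → EReal} (hI : IsCondEssInf H μ X I)
    (hκ : CondLaw H μ X κ) (hHF : H ≤ mΩ) :
    ∀ᵐ ω ∂μ, I ω ≤ sInf (Real.toEReal '' (κ ω).support) := by
  have hq : ∀ q : ℚ, ∀ᵐ ω ∂μ, ((q : ℝ) : EReal) ≤ I ω → κ ω (Iio (q : ℝ)) = 0 := fun q =>
    hκ.ae_apply_eq_zero_of_ae_notMem hHF measurableSet_Iio
      (measurableSet_le measurable_const hI.1)
      (hI.2.1.mono fun _ hIX (hqI : _ ≤ I _) hXq =>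
        (hqI.trans hIX).not_gt (EReal.coe_lt_coe_iff.2 hXq))
  filter_upwards [ae_all_iff.2 hq] with ω hω
  exact EReal.le_of_forall_rat_le_imp_le fun q hqI =>
    Measure.coe_le_sInf_support_iff.2 (hω q hqI)

lemma IsCondEssSup.ae_sSup_support_le {S : Ω → EReal} (hS : IsCondEssSup H μ X S)
    (hκ : CondLaw H μ X κ) (hHF : H ≤ mΩ) :
    ∀ᵐ ω ∂μ, sSup (Real.toEReal '' (κ ω).support) ≤ S ω := by
  have hq : ∀ q : ℚ, ∀ᵐ ω ∂μ, S ω ≤ ((q : ℝ) : EReal) → κ ω (Ioi (q : ℝ)) = 0 := fun q =>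
    hκ.ae_apply_eq_zero_of_ae_notMem hHF measurableSet_Ioi
      (measurableSet_le hS.1 measurable_const)
      (hS.2.1.mono fun _ hXS (hSq : S _ ≤ _) hqX =>
        (hXS.trans hSq).not_gt (EReal.coe_lt_coe_iff.2 hqX))
  filter_upwards [ae_all_iff.2 hq] with ω hω
  exact EReal.le_of_forall_le_rat_imp_le fun q hSq =>
    Measure.sSup_support_le_coe_iff.2 (hω q hSq)

lemma IsCondEssInf.ae_eq_sInf_support {I : Ω → EReal} (hI : IsCondEssInf H μ X I)
    (hκ : CondLaw H μ X κ) (hHF : H ≤ mΩ) :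
    ∀ᵐ ω ∂μ, I ω = sInf (Real.toEReal '' (κ ω).support) := by
  have hsInf_le := hI.2.2 _ hκ.measurable_sInf_support
    ((hκ.ae_mem_support hHF).mono fun _ h => sInf_le (mem_image_of_mem _ h))
  filter_upwards [hI.ae_le_sInf_support hκ hHF, hsInf_le] with ω hle hge
  exact le_antisymm hle hge

lemma IsCondEssSup.ae_eq_sSup_support {S : Ω → EReal} (hS : IsCondEssSup H μ X S)
    (hκ : CondLaw H μ X κ) (hHF : H ≤ mΩ) :
    ∀ᵐ ω ∂μ, S ω = sSup (Real.toEReal '' (κ ω).support) := by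
  have hle_sSup := hS.2.2 _ hκ.measurable_sSup_support
    ((hκ.ae_mem_support hHF).mono fun _ h => le_sSup (mem_image_of_mem _ h))
  filter_upwards [hle_sSup, hS.ae_sSup_support_le hκ hHF] with ω hle hge
  exact le_antisymm hle hge

end RealValued

theorem condEssInf_condEssSup_eq_inf_sup_condSupp_general
    {Ω : Type*} (H : MeasurableSpace Ω) [mΩ : MeasurableSpace Ω] (μ : Measure Ω)
    (hHF : H ≤ mΩ)
    (X : Ω → ℝ)
    (κ : Ω → Measure ℝ) (hκ : CondLaw H μ X κ)
    (I S : Ω → EReal) (hI : IsCondEssInf H μ X I) (hS : IsCondEssSup H μ X S) :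
    (∀ᵐ ω ∂μ, I ω = sInf (Real.toEReal '' condSupp κ ω)) ∧
    (∀ᵐ ω ∂μ, S ω = sSup (Real.toEReal '' condSupp κ ω)) ∧
    (∀ᵐ ω ∂μ, I ω ≠ ⊥ → I ω ∈ Real.toEReal '' condSupp κ ω) ∧
    (∀ᵐ ω ∂μ, S ω ≠ ⊤ → S ω ∈ Real.toEReal '' condSupp κ ω) ∧
    (∀ᵐ ω ∂μ, convexHull ℝ (condSupp κ ω) =
      {x : ℝ | I ω ≤ (x : EReal) ∧ (x : EReal) ≤ S ω}) := by
  have := hκ.isProb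
  simp only [condSupp_eq_support]
  have hI_eq := hI.ae_eq_sInf_support hκ hHF
  have hS_eq := hS.ae_eq_sSup_support hκ hHF
  have hne : ∀ ω, (κ ω).support.Nonempty := fun ω => Measure.nonempty_support (NeZero.ne _)
  refine ⟨hI_eq, hS_eq, ?_, ?_, ?_⟩
  · filter_upwards [hI_eq] with ω hIω
    rw [hIω]
    exact Measure.isClosed_support.sInf_toEReal_image_mem (hne ω)
  · filter_upwards [hS_eq] with ω hSω
    rw [hSω]
    exact Measure.isClosed_support.sSup_toEReal_image_mem (hne ω)
  · filter_upwards [hI_eq, hS_eq] with ω hIω hSω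
    rw [hIω, hSω]
    exact Measure.isClosed_support.convexHull_eq_setOf_sInf_le_le_sSup

/-- relations between the conditional essential infimum/supremum of a
real random variable and its conditional support. -/
theorem condEssInf_condEssSup_eq_inf_sup_condSupp
    {Ω : Type*} (H : MeasurableSpace Ω) [mΩ : MeasurableSpace Ω] (μ : Measure Ω)
    [IsProbabilityMeasure μ] [μ.IsComplete] (hHF : H ≤ mΩ)
    (hHcomp : ∀ s : Set Ω, μ s = 0 → MeasurableSet[H] s)
    (X : Ω → ℝ) (hX : Measurable[mΩ] X)
    (κ : Ω → Measure ℝ) (hκ : CondLaw H μ X κ)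
    (I S : Ω → EReal) (hI : IsCondEssInf H μ X I) (hS : IsCondEssSup H μ X S) :
    (∀ᵐ ω ∂μ, I ω = sInf (Real.toEReal '' condSupp κ ω)) ∧
    (∀ᵐ ω ∂μ, S ω = sSup (Real.toEReal '' condSupp κ ω)) ∧
    (∀ᵐ ω ∂μ, I ω ≠ ⊥ → I ω ∈ Real.toEReal '' condSupp κ ω) ∧
    (∀ᵐ ω ∂μ, S ω ≠ ⊤ → S ω ∈ Real.toEReal '' condSupp κ ω) ∧
    (∀ᵐ ω ∂μ, convexHull ℝ (condSupp κ ω) =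
      {x : ℝ | I ω ≤ (x : EReal) ∧ (x : EReal) ≤ S ω}) :=
  condEssInf_condEssSup_eq_inf_sup_condSupp_general H (mΩ := mΩ) μ hHF X κ hκ I S hI hS
end
end

section
/- In the one-period market with prices y ∈ L^0(ℝ^d, H) and Y ∈ L^0(ℝ^d, F), the no-arbitrage condition NA implies the AIP condition, but the converse fails: there exists a one-period market (with d = 1, trivial H, y = 0 and Y uniformly distributed on [0,1]) satisfying AIP in which NA fails. -/
open MeasureTheory Set Filter
open scoped Classical

noncomputable section

/-!
NA implies AIP: if a price `x` of the zero claim, hedged by `θ`, were negative on a non-null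
event, the `H`-measurable strategy `θ` restricted to `{x < 0}` would be an arbitrage.

Conversely, take `H` trivial, `y = 0` and `Y` uniform on `[0, 1]`. Prices of the zero claim are
then constants `c` with `c + a Y ≥ 0` a.s. for a constant `a`; since `Y` is arbitrarily close to
`0` with positive probability, `c ≥ 0`, so AIP holds. But buying one unit of the asset is an
arbitrage, as `Y ≥ 0` and `Y ≠ 0` a.s.
-/

def NoArbitrage {Ω : Type*} (H : MeasurableSpace Ω) {mΩ : MeasurableSpace Ω} (μ : Measure Ω)
    {d : ℕ} (y Y : Ω → Fin d → ℝ) : Prop :=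
  ∀ θ : Ω → Fin d → ℝ, Measurable[H] θ →
    (∀ᵐ ω ∂μ, 0 ≤ dotp (θ ω) fun i => Y ω i - y ω i) →
    ∀ᵐ ω ∂μ, dotp (θ ω) (fun i => Y ω i - y ω i) = 0

section SuperHedging

variable {Ω : Type*} {mΩ : MeasurableSpace Ω} {μ : Measure Ω}

theorem ae_eq_zero_of_isEssInfSet {S : Set (Ω → ℝ)} {p : Ω → EReal}
    (hp : IsEssInfSet μ S p) (h0 : (fun _ => (0 : ℝ)) ∈ S) (hS : ∀ f ∈ S, ∀ᵐ ω ∂μ, 0 ≤ f ω) :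
    p =ᵐ[μ] fun _ => (0 : EReal) := by
  obtain ⟨-, hp_le, hp_ge⟩ := hp
  have hle : ∀ᵐ ω ∂μ, p ω ≤ 0 := by simpa using hp_le _ h0
  have hge : ∀ᵐ ω ∂μ, 0 ≤ p ω := hp_ge _ measurable_const fun f hf => by
    filter_upwards [hS f hf] with ω hω
    exact_mod_cast hω
  filter_upwards [hle, hge] with ω h₁ h₂
  exact le_antisymm h₁ h₂

theorem zero_mem_prices_zero (H : MeasurableSpace Ω) {d : ℕ} (y Y : Ω → Fin d → ℝ) :
    (fun _ => (0 : ℝ)) ∈ Prices H μ y Y (fun _ => 0) :=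
  ⟨measurable_const, fun _ _ => 0, measurable_const, by simp [dotp]⟩

theorem NoArbitrage.ae_nonneg_of_mem_prices_zero {H : MeasurableSpace Ω} {d : ℕ}
    {y Y : Ω → Fin d → ℝ} (hNA : NoArbitrage H μ y Y) {x : Ω → ℝ}
    (hx : x ∈ Prices H μ y Y fun _ => 0) : ∀ᵐ ω ∂μ, 0 ≤ x ω := by
  obtain ⟨hxm, θ, hθm, hθ⟩ := hx
  set A := {ω | x ω < 0}
  have hgain : ∀ ω, (dotp (A.indicator θ ω) fun i => Y ω i - y ω i)
      = A.indicator (fun ω => dotp (θ ω) fun i => Y ω i - y ω i) ω := by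
    intro ω
    by_cases hω : ω ∈ A <;> simp [hω, dotp]
  have hzero := hNA (A.indicator θ) (hθm.indicator (measurableSet_lt hxm measurable_const)) (by
    filter_upwards [hθ] with ω hω
    rw [hgain]
    by_cases hωA : ω ∈ A
    · rw [indicator_of_mem hωA]
      linarith [show x ω < 0 from hωA]
    · rw [indicator_of_notMem hωA])
  filter_upwards [hθ, hzero] with ω hω hω₀
  by_contra hneg
  have hωA : ω ∈ A := not_le.1 hneg
  rw [hgain, indicator_of_mem hωA] at hω₀
  linarith

theorem nonneg_of_ae_nonneg_add_mul {Y : Ω → ℝ} (hY : ∀ ε > 0, μ {ω | |Y ω| < ε} ≠ 0)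
    {c a : ℝ} (h : ∀ᵐ ω ∂μ, 0 ≤ c + a * Y ω) : 0 ≤ c := by
  refine le_of_forall_sub_le fun ε hε => ?_
  have hδ : 0 < ε / (|a| + 1) := by positivity
  obtain ⟨ω, hω, hYω⟩ := (h.and_frequently (frequently_ae_iff.2 (hY _ hδ))).exists
  have hYω' : |a| * |Y ω| ≤ ε := calc
    |a| * |Y ω| ≤ (|a| + 1) * (ε / (|a| + 1)) := by gcongr; linarith
    _ = ε := by field_simp
  linarith [abs_mul a (Y ω) ▸ le_abs_self (a * Y ω)]

theorem nonneg_of_mem_prices_bot {Y : Ω → ℝ} (hY : ∀ ε > 0, μ {ω | |Y ω| < ε} ≠ 0)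
    {x : Ω → ℝ} (hx : x ∈ Prices ⊥ μ (fun _ _ => 0) (fun ω (_ : Fin 1) => Y ω) fun _ => 0) :
    ∀ ω, 0 ≤ x ω := by
  obtain ⟨hxm, θ, hθm, hθ⟩ := hx
  obtain ⟨c, rfl⟩ := eq_const_of_measurable_bot hxm
  obtain ⟨a, rfl⟩ := eq_const_of_measurable_bot hθm
  exact fun _ => nonneg_of_ae_nonneg_add_mul hY (c := c) (a := a 0) (by simpa [dotp] using hθ)

end SuperHedging

section UniformLaw

variable {Ω : Type*} {mΩ : MeasurableSpace Ω} {μ : Measure Ω} {Y : Ω → ℝ}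

theorem measure_abs_lt_ne_zero_of_map_eq_uniform (hYm : Measurable Y)
    (hmap : μ.map Y = volume.restrict (Icc 0 1)) : ∀ ε > 0, μ {ω | |Y ω| < ε} ≠ 0 := by
  intro ε hε
  have hsub : Ioo 0 (min ε 1) ⊆ Ioo (-ε) ε ∩ Icc 0 1 := fun t ht =>
    ⟨⟨by linarith [ht.1], ht.2.trans_le (min_le_left _ _)⟩,
      ht.1.le, (ht.2.trans_le (min_le_right _ _)).le⟩
  have hpos : 0 < volume (Ioo (-ε) ε ∩ Icc 0 1) :=
    (by simpa using lt_min hε one_pos : 0 < volume (Ioo 0 (min ε 1))).trans_le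
      (measure_mono hsub)
  have hpre : {ω | |Y ω| < ε} = Y ⁻¹' Ioo (-ε) ε := by ext; simp [abs_lt]
  rw [hpre, ← Measure.map_apply hYm measurableSet_Ioo, hmap,
    Measure.restrict_apply measurableSet_Ioo]
  exact hpos.ne'

theorem not_ae_eq_zero_of_map_eq_uniform (hYm : Measurable Y)
    (hmap : μ.map Y = volume.restrict (Icc 0 1)) : ¬ ∀ᵐ ω ∂μ, Y ω = 0 := by
  intro h
  have hnull : μ (Y ⁻¹' {0}ᶜ) = 0 := h
  rw [← Measure.map_apply hYm (measurableSet_singleton 0).compl, hmap,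
    Measure.restrict_apply (measurableSet_singleton 0).compl, ← sdiff_eq_compl_inter,
    measure_sdiff_null (measure_singleton 0), Real.volume_Icc] at hnull
  simp at hnull

end UniformLaw

theorem exists_uniform_nonneg_on_complete_probability_space :
    ∃ (Ω : Type) (_ : MeasurableSpace Ω) (μ : Measure Ω),
      IsProbabilityMeasure μ ∧ μ.IsComplete ∧
      ∃ Y : Ω → ℝ, Measurable Y ∧ (∀ ω, 0 ≤ Y ω) ∧ μ.map Y = volume.restrict (Icc 0 1) := by
  set ν := volume.restrict (Icc (0 : ℝ) 1)
  have hYm : Measurable fun t : ℝ => max t 0 := measurable_id.max measurable_const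
  -- `max t 0` is `ν`-a.e. the identity but nonnegative everywhere; it is typed on `ℝ` because
  -- the synonym `NullMeasurableSpace ℝ ν` carries no order.
  refine ⟨NullMeasurableSpace ℝ ν, inferInstance, ν.completion, ⟨?_⟩, inferInstance,
    (fun t : ℝ => max t 0 : ℝ → ℝ), hYm.nullMeasurable.measurable', fun _ => le_max_right _ _, ?_⟩
  · change ν univ = 1
    simp [ν]
  ext s hs
  rw [Measure.map_apply hYm.nullMeasurable.measurable' hs]
  change ν ((fun t : ℝ => max t 0) ⁻¹' s : Set ℝ) = ν s
  rw [Measure.restrict_apply' measurableSet_Icc, Measure.restrict_apply' measurableSet_Icc]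
  congr 1
  exact Set.ext fun t => and_congr_left fun ht => by rw [mem_preimage, max_eq_left ht.1]

/-- the no-arbitrage condition NA implies AIP, and the converse fails:
there is a one-period market (`d = 1`, trivial initial σ-algebra, `y = 0`, `Y`
uniformly distributed on `[0,1]`) satisfying AIP in which NA fails. -/
theorem na_implies_aip_and_not_conversely :
    (∀ (Ω : Type) (H : MeasurableSpace Ω) [mΩ : MeasurableSpace Ω] (μ : Measure Ω),
      IsProbabilityMeasure μ → μ.IsComplete → H ≤ mΩ →
      (∀ s : Set Ω, μ s = 0 → MeasurableSet[H] s) →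
      ∀ (d : ℕ) (y Y : Ω → Fin d → ℝ), Measurable[H] y → Measurable[mΩ] Y →
      (∀ ω i, 0 ≤ y ω i) → (∀ ω i, 0 ≤ Y ω i) →
      -- NA
      (∀ θ : Ω → Fin d → ℝ, Measurable[H] θ →
        (∀ᵐ ω ∂μ, 0 ≤ dotp (θ ω) fun i => Y ω i - y ω i) →
        ∀ᵐ ω ∂μ, dotp (θ ω) (fun i => Y ω i - y ω i) = 0) →
      -- AIP
      ∀ p0 : Ω → EReal, IsEssInfSet μ (Prices H μ y Y fun _ => (0:ℝ)) p0 →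
        p0 =ᵐ[μ] fun _ => (0:EReal)) ∧
    (∃ (Ω : Type) (mΩ : MeasurableSpace Ω) (μ : Measure Ω),
      IsProbabilityMeasure μ ∧ μ.IsComplete ∧
      ∃ Y : Ω → ℝ, Measurable[mΩ] Y ∧ (∀ ω, 0 ≤ Y ω) ∧
        μ.map Y = volume.restrict (Set.Icc (0:ℝ) 1) ∧
        -- AIP holds (with trivial initial σ-algebra and y = 0)
        (∀ p0 : Ω → EReal,
          IsEssInfSet μ (Prices (⊥ : MeasurableSpace Ω) μ (fun _ _ => (0:ℝ))
            (fun ω (_ : Fin 1) => Y ω) fun _ => (0:ℝ)) p0 →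
          p0 =ᵐ[μ] fun _ => (0:EReal)) ∧
        -- NA fails
        ¬ (∀ θ : Ω → Fin 1 → ℝ, Measurable[(⊥ : MeasurableSpace Ω)] θ →
            (∀ᵐ ω ∂μ, 0 ≤ dotp (θ ω) fun _ => Y ω - 0) →
            ∀ᵐ ω ∂μ, dotp (θ ω) (fun _ => Y ω - 0) = 0)) := by
  refine ⟨fun Ω H _ μ _ _ _ _ d y Y _ _ _ _ hNA p0 hp0 =>
    ae_eq_zero_of_isEssInfSet hp0 (zero_mem_prices_zero H y Y)
      fun _ hx => NoArbitrage.ae_nonneg_of_mem_prices_zero hNA hx, ?_⟩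
  obtain ⟨Ω, mΩ, μ, hμ, hcompl, Y, hYm, hY0, hmap⟩ :=
    exists_uniform_nonneg_on_complete_probability_space
  refine ⟨Ω, mΩ, μ, hμ, hcompl, Y, hYm, hY0, hmap, fun p0 hp0 => ?_, fun hNA => ?_⟩
  · exact ae_eq_zero_of_isEssInfSet hp0 (zero_mem_prices_zero ⊥ _ _) fun _ hx =>
      ae_of_all _ (nonneg_of_mem_prices_bot
        (measure_abs_lt_ne_zero_of_map_eq_uniform hYm hmap) hx)
  · refine not_ae_eq_zero_of_map_eq_uniform hYm hmap ?_
    have hY0' : ∀ᵐ ω ∂μ, 0 ≤ dotp (fun _ => 1) fun (_ : Fin 1) => Y ω - 0 :=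
      ae_of_all _ fun ω => by simpa [dotp] using hY0 ω
    simpa [dotp] using hNA (fun _ _ => 1) measurable_const hY0'
end
end

section
/- In the one-period market with prices y ∈ L^0(ℝ^d, H) and Y ∈ L^0(ℝ^d, F), let Z ∈ L^0(ℝ, F) be a contingent claim with infimum super-hedging cost p(Z). Then AIP holds for the market (y, Y) if and only if AIP holds for the extended market with additional asset (p(Z), Z), i.e., if and only if p^{Y,Z}(0) = 0 a.s., where p^{Y,Z}(0) := ess inf { x ∈ L^0(ℝ, H) : ∃ α ∈ L^0(ℝ, H), ∃ θ ∈ L^0(ℝ^d, H), x + α(Z − p(Z)) + θ·(Y − y) ≥ 0 a.s. }. -/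
open MeasureTheory Set Filter
open scoped Classical

noncomputable section

/-- Auxiliary: componentwise measurability for `Fin d → ℝ` valued maps. -/
lemma measurable_pi_fin {Ω : Type*} [H : MeasurableSpace Ω] {d : ℕ} {f : Ω → Fin d → ℝ}
    (h : ∀ i, Measurable[H] fun ω => f ω i) : Measurable[H] f :=
  measurable_pi_lambda f h

/-- AIP holds in the market `(y, Y)` if and only if AIP holds in the
market extended with the additional asset `(p(Z), Z)`, where `p(Z)` is the infimum
super-hedging cost of the claim `Z`. -/
theorem aip_iff_aip_extended
    {Ω : Type*} (H : MeasurableSpace Ω) [mΩ : MeasurableSpace Ω] (μ : Measure Ω)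
    [IsProbabilityMeasure μ] [μ.IsComplete] (hHF : H ≤ mΩ)
    (hHcomp : ∀ s : Set Ω, μ s = 0 → MeasurableSet[H] s)
    {d : ℕ} (y Y : Ω → Fin d → ℝ)
    (hy : Measurable[H] y) (hY : Measurable[mΩ] Y)
    (hy0 : ∀ ω i, 0 ≤ y ω i) (hY0 : ∀ ω i, 0 ≤ Y ω i)
    (Z : Ω → ℝ) (hZ : Measurable[mΩ] Z)
    (pZ : Ω → ℝ) (hpZmeas : Measurable[H] pZ)
    (hpZ : IsEssInfSet μ (Prices H μ y Y Z) fun ω => ((pZ ω : ℝ) : EReal))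
    (p0 : Ω → EReal)
    (hp0 : IsEssInfSet μ (Prices H μ y Y fun _ => (0:ℝ)) p0)
    (q0 : Ω → EReal)
    (hq0 : IsEssInfSet μ (PricesExt H μ y Y Z pZ) q0) :
    (p0 =ᵐ[μ] fun _ => (0:EReal)) ↔ (q0 =ᵐ[μ] fun _ => (0:EReal)) := by
  classical
  -- the zero function is a price for the zero claim
  have hzero0 : (fun _ => (0:ℝ)) ∈ Prices H μ y Y (fun _ => (0:ℝ)) := by
    refine ⟨measurable_const, fun _ => 0, measurable_const, ae_of_all _ fun ω => by simp [dotp]⟩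
  have hzeroExt : (fun _ => (0:ℝ)) ∈ PricesExt H μ y Y Z pZ := by
    refine ⟨measurable_const, fun _ => 0, measurable_const, fun _ => 0, measurable_const,
      ae_of_all _ fun ω => by simp [dotp]⟩
  -- Prices Z is nonempty
  have hPZne : (Prices H μ y Y Z).Nonempty := by
    by_contra hne
    rw [Set.not_nonempty_iff_eq_empty] at hne
    have h := hpZ.2.2 (fun _ => (⊤ : EReal)) measurable_const (by simp [hne])
    have hNB : (ae μ).NeBot := ae_neBot.mpr (IsProbabilityMeasure.ne_zero μ)
    obtain ⟨ω, hω⟩ := h.exists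
    exact absurd hω (not_le.mpr (EReal.coe_lt_top _))
  constructor
  · intro hp00
    -- every element of Prices(0) is nonnegative
    have hp0le0 : ∀ f ∈ Prices H μ y Y (fun _ => (0:ℝ)), ∀ᵐ ω ∂μ, 0 ≤ f ω := by
      intro f hf
      filter_upwards [hp0.2.1 f hf, hp00] with ω h1 h2
      rw [h2] at h1
      exact_mod_cast h1
    -- key: every element of PricesExt is nonnegative
    have key : ∀ x ∈ PricesExt H μ y Y Z pZ, ∀ᵐ ω ∂μ, 0 ≤ x ω := by
      rintro x ⟨hxm, α, hαm, θ, hθm, hae⟩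
      obtain ⟨xb, hxbm, θb, hθbm, hb⟩ := hPZne
      have hsetneg : MeasurableSet[H] {ω | α ω < 0} := measurableSet_lt hαm measurable_const
      have hsetpos : MeasurableSet[H] {ω | 0 < α ω} := measurableSet_lt measurable_const hαm
      have hsetzero : MeasurableSet[H] {ω | α ω = 0} := hαm (measurableSet_singleton 0)
      -- case α < 0
      have hneg : ∀ᵐ ω ∂μ, α ω < 0 → 0 ≤ x ω := by
        set x2 : Ω → ℝ := fun ω => if α ω < 0 then x ω / (-α ω) + pZ ω else xb ω with hx2def
        set θ2 : Ω → Fin d → ℝ :=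
          fun ω => if α ω < 0 then (fun i => θ ω i / (-α ω)) else θb ω with hθ2def
        have hx2mem : x2 ∈ Prices H μ y Y Z := by
          refine ⟨Measurable.ite hsetneg ((hxm.div hαm.neg).add hpZmeas) hxbm, θ2,
            Measurable.ite hsetneg (measurable_pi_fin (H := H) fun i =>
              ((measurable_pi_apply i).comp hθm).div hαm.neg) hθbm, ?_⟩
          filter_upwards [hae, hb] with ω h1 h2
          by_cases hω : α ω < 0
          · simp only [hx2def, hθ2def, if_pos hω]
            have ha : 0 < -α ω := by linarith
            set D := dotp (θ ω) (fun i => Y ω i - y ω i) with hD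
            have hd : dotp (fun i => θ ω i / (-α ω)) (fun i => Y ω i - y ω i) = D / (-α ω) := by
              simp [hD, dotp, Finset.sum_div, div_mul_eq_mul_div]
            rw [hd]
            have heq : x ω / (-α ω) + pZ ω + D / (-α ω)
                = (x ω + (-α ω) * pZ ω + D) / (-α ω) := by
              field_simp [hω.ne]
              ring
            rw [heq, le_div_iff₀ ha]
            nlinarith [h1]
          · simp only [hx2def, hθ2def, if_neg hω]
            exact h2
        filter_upwards [hpZ.2.1 x2 hx2mem] with ω h hω
        rw [EReal.coe_le_coe_iff] at h
        simp only [hx2def, if_pos hω] at h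
        have ha : 0 < -α ω := by linarith
        have hdiv : 0 ≤ x ω / (-α ω) := by linarith
        have := mul_nonneg hdiv ha.le
        rwa [div_mul_cancel₀ _ ha.ne'] at this
      -- case α = 0
      have hzero : ∀ᵐ ω ∂μ, α ω = 0 → 0 ≤ x ω := by
        set x3 : Ω → ℝ := fun ω => if α ω = 0 then x ω else 0 with hx3def
        set θ3 : Ω → Fin d → ℝ := fun ω => if α ω = 0 then θ ω else 0 with hθ3def
        have hmem : x3 ∈ Prices H μ y Y (fun _ => (0:ℝ)) := by
          refine ⟨Measurable.ite hsetzero hxm measurable_const, θ3,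
            Measurable.ite hsetzero hθm measurable_const, ?_⟩
          filter_upwards [hae] with ω h1
          by_cases hω : α ω = 0
          · simp only [hx3def, hθ3def, if_pos hω]
            simpa [hω] using h1
          · simp [hx3def, hθ3def, if_neg hω, dotp]
        filter_upwards [hp0le0 x3 hmem] with ω h hω
        simpa [hx3def, if_pos hω] using h
      -- case α > 0 : key inequality per superhedging price f
      have hposlem : ∀ f ∈ Prices H μ y Y Z,
          ∀ᵐ ω ∂μ, 0 < α ω → pZ ω - x ω / α ω ≤ f ω := by
        rintro f ⟨hfm, θf, hθfm, hf⟩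
        set x4 : Ω → ℝ := fun ω => if 0 < α ω then x ω + α ω * (f ω - pZ ω) else 0 with hx4def
        set θ4 : Ω → Fin d → ℝ :=
          fun ω => if 0 < α ω then (fun i => θ ω i + α ω * θf ω i) else 0 with hθ4def
        have hmem : x4 ∈ Prices H μ y Y (fun _ => (0:ℝ)) := by
          refine ⟨Measurable.ite hsetpos (hxm.add (hαm.mul (hfm.sub hpZmeas))) measurable_const,
            θ4, Measurable.ite hsetpos (measurable_pi_fin (H := H) fun i =>
              ((measurable_pi_apply i).comp hθm).add
                (hαm.mul ((measurable_pi_apply i).comp hθfm))) measurable_const, ?_⟩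
          filter_upwards [hae, hf] with ω h1 h2
          by_cases hω : 0 < α ω
          · simp only [hx4def, hθ4def, if_pos hω]
            have hd : dotp (fun i => θ ω i + α ω * θf ω i) (fun i => Y ω i - y ω i)
                = dotp (θ ω) (fun i => Y ω i - y ω i)
                  + α ω * dotp (θf ω) (fun i => Y ω i - y ω i) := by
              simp [dotp, add_mul, Finset.sum_add_distrib, Finset.mul_sum, mul_assoc]
            rw [hd]
            nlinarith [h1, h2]
          · simp [hx4def, hθ4def, if_neg hω, dotp]
        filter_upwards [hp0le0 x4 hmem] with ω h hω
        simp only [hx4def, if_pos hω] at h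
        have h3 : pZ ω - f ω ≤ x ω / α ω := (le_div_iff₀ hω).mpr (by nlinarith)
        linarith
      -- assemble the ζ function for the α > 0 case
      have hpos : ∀ᵐ ω ∂μ, 0 < α ω → 0 ≤ x ω := by
        set ζr : Ω → ℝ :=
          fun ω => if 0 < α ω then max (pZ ω) (pZ ω - x ω / α ω) else pZ ω with hζdef
        have hζrm : Measurable[H] ζr :=
          Measurable.ite hsetpos (hpZmeas.max (hpZmeas.sub (hxm.div hαm))) hpZmeas
        have hζm : Measurable[mΩ] fun ω => ((ζr ω : ℝ) : EReal) :=
          (hζrm.mono hHF le_rfl).coe_real_ereal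
        have hbound : ∀ f ∈ Prices H μ y Y Z,
            ∀ᵐ ω ∂μ, ((ζr ω : ℝ) : EReal) ≤ (f ω : EReal) := by
          intro f hf
          filter_upwards [hpZ.2.1 f hf, hposlem f hf] with ω h1 h2
          rw [EReal.coe_le_coe_iff] at h1 ⊢
          by_cases hω : 0 < α ω
          · simp only [hζdef, if_pos hω]
            exact max_le h1 (h2 hω)
          · simpa [hζdef, if_neg hω] using h1
        have hmax := hpZ.2.2 _ hζm hbound
        filter_upwards [hmax] with ω h hω
        rw [EReal.coe_le_coe_iff] at h
        simp only [hζdef, if_pos hω] at h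
        have h2 : pZ ω - x ω / α ω ≤ pZ ω := le_trans (le_max_right _ _) h
        have hdiv : 0 ≤ x ω / α ω := by linarith
        have := mul_nonneg hdiv hω.le
        rwa [div_mul_cancel₀ _ hω.ne'] at this
      filter_upwards [hneg, hzero, hpos] with ω h1 h2 h3
      rcases lt_trichotomy (α ω) 0 with h | h | h
      · exact h1 h
      · exact h2 h
      · exact h3 h
    -- conclude q0 = 0 a.e.
    have hq0ge : ∀ᵐ ω ∂μ, (0 : EReal) ≤ q0 ω := by
      have := hq0.2.2 (fun _ => (0:EReal)) measurable_const (fun f hf => by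
        filter_upwards [key f hf] with ω h
        exact_mod_cast h)
      exact this
    have hq0le := hq0.2.1 _ hzeroExt
    filter_upwards [hq0ge, hq0le] with ω h1 h2
    exact le_antisymm (by simpa using h2) h1
  · intro hq00
    have hsub : ∀ f ∈ Prices H μ y Y (fun _ => (0:ℝ)), f ∈ PricesExt H μ y Y Z pZ := by
      rintro f ⟨hfm, θf, hθfm, hf⟩
      refine ⟨hfm, fun _ => 0, measurable_const, θf, hθfm, ?_⟩
      filter_upwards [hf] with ω h
      simpa using h
    have hle : ∀ᵐ ω ∂μ, q0 ω ≤ p0 ω :=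
      hp0.2.2 q0 hq0.1 (fun f hf => hq0.2.1 f (hsub f hf))
    have hp0le := hp0.2.1 _ hzero0
    filter_upwards [hle, hp0le, hq00] with ω h1 h2 h3
    refine le_antisymm (by simpa using h2) ?_
    calc (0:EReal) = q0 ω := h3.symm
    _ ≤ p0 ω := h1
end
end
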